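/- Let X be a finite subset of R^k, H a Hamiltonian cycle on X minimizing the sum of squared edge lengths, t >= 1 an integer, and alpha = sqrt(t/(4(t+1))). Then every point of R^k is contained in at most 2t+1 of the open balls of radius alpha*|e| centered at the midpoints of edges e of H. -/

import Mathlib

/-!
Minimality makes every 2-opt exchange non-improving: for edges `(a, b)` and `(c, d)` of the
tour, `|a - b|² + |c - d|² ≤ |a - c|² + |b - d|²`, which by the parallelogram law says that the
edge vectors `dᵢ` and midpoints `mᵢ` satisfy `|dᵢ + dⱼ|² ≤ 4 |mᵢ - mⱼ|²` for `i ≠ j`.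
Sum over ordered pairs of the `s` edges whose balls contain `x`, treating the diagonal terms
`|2 dᵢ|² = 4 |dᵢ|²` separately; with the centroid inequality this gives
`2 s Σ |dᵢ|² ≤ Σ |dᵢ + dⱼ|² ≤ 4 Σ |mᵢ - mⱼ|² + 4 Σ |dᵢ|² ≤ 8 s Σ |mᵢ - x|² + 4 Σ |dᵢ|²`,
and `|mᵢ - x|² < α² |dᵢ|²`. Hence `s (1 - 4 α²) < 2`, where `1 - 4 α² = 1 / (t + 1)`.
-/

open scoped Classical

/-- Cyclic successor on `Fin n`. -/
def nxt {n : ℕ} (i : Fin n) : Fin n := ⟨(i.val + 1) % n, Nat.mod_lt _ i.pos⟩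

/-- `f` is a Hamiltonian cycle on the finite set `X`: a cyclic ordering of the points
of `X`, i.e. an injective enumeration of `X` by `Fin X.card`; its edges join `f i`
and `f (nxt i)`. -/
def IsHamCycle {k : ℕ} (X : Finset (EuclideanSpace ℝ (Fin k)))
    (f : Fin X.card → EuclideanSpace ℝ (Fin k)) : Prop :=
  Function.Injective f ∧ ∀ x, x ∈ X ↔ ∃ i, f i = x

open Finset

section InnerProductSpace

variable {E : Type*} [NormedAddCommGroup E] [InnerProductSpace ℝ E] {ι : Type*}

lemma sum_sum_norm_add_sq (s : Finset ι) (u w : ι → E) :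
    ∑ p ∈ s, ∑ q ∈ s, ‖u p + w q‖ ^ 2
      = #s * ∑ p ∈ s, ‖u p‖ ^ 2 + 2 * inner ℝ (∑ p ∈ s, u p) (∑ q ∈ s, w q)
        + #s * ∑ q ∈ s, ‖w q‖ ^ 2 := by
  rw [sum_inner]
  simp only [norm_add_sq_real, sum_add_distrib, sum_const, nsmul_eq_mul, ← mul_sum, inner_sum]

lemma two_mul_card_mul_sum_norm_sq_le (s : Finset ι) (v : ι → E) :
    2 * #s * ∑ p ∈ s, ‖v p‖ ^ 2 ≤ ∑ p ∈ s, ∑ q ∈ s, ‖v p + v q‖ ^ 2 := by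
  rw [sum_sum_norm_add_sq, real_inner_self_eq_norm_sq]
  nlinarith [sq_nonneg ‖∑ p ∈ s, v p‖]

lemma sum_sum_norm_sub_sq_le (s : Finset ι) (v : ι → E) (x : E) :
    ∑ p ∈ s, ∑ q ∈ s, ‖v p - v q‖ ^ 2 ≤ 2 * #s * ∑ p ∈ s, ‖v p - x‖ ^ 2 := by
  have h := sum_sum_norm_add_sq s (fun p => v p - x) (fun q => -(v q - x))
  simp only [sum_neg_distrib, inner_neg_right, norm_neg, real_inner_self_eq_norm_sq,
    ← sub_eq_add_neg, sub_sub_sub_cancel_right] at h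
  rw [h]
  nlinarith [sq_nonneg ‖∑ p ∈ s, (v p - x)‖]

lemma norm_sub_add_sub_sq_le_four_mul_norm_midpoint_sub_sq {a b c d : E}
    (h : ‖a - b‖ ^ 2 + ‖c - d‖ ^ 2 ≤ ‖a - c‖ ^ 2 + ‖b - d‖ ^ 2) :
    ‖a - b + (c - d)‖ ^ 2 ≤ 4 * ‖midpoint ℝ a b - midpoint ℝ c d‖ ^ 2 := by
  have hmid : midpoint ℝ a b - midpoint ℝ c d = (2 : ℝ)⁻¹ • (a - c + (b - d)) := by
    rw [midpoint_eq_smul_add, midpoint_eq_smul_add, ← smul_sub]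
    congr 1
    abel
  have hdiff : a - c - (b - d) = a - b - (c - d) := by abel
  have h₁ := parallelogram_law_with_norm ℝ (a - c) (b - d)
  have h₂ := parallelogram_law_with_norm ℝ (a - b) (c - d)
  rw [hdiff] at h₁
  rw [hmid, norm_smul, mul_pow]
  norm_num
  nlinarith

lemma card_mul_one_sub_four_mul_lt_two (s : Finset ι) (d m : ι → E) (x : E) (c : ℝ)
    (hpair : ∀ p ∈ s, ∀ q ∈ s, p ≠ q → ‖d p + d q‖ ^ 2 ≤ 4 * ‖m p - m q‖ ^ 2)
    (hball : ∀ p ∈ s, ‖m p - x‖ ^ 2 < c * ‖d p‖ ^ 2) :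
    #s * (1 - 4 * c) < 2 := by
  rcases s.eq_empty_or_nonempty with rfl | hs
  · simp
  set T := ∑ p ∈ s, ‖d p‖ ^ 2
  have hdiag : ∀ p, ‖d p + d p‖ ^ 2 = 4 * ‖d p‖ ^ 2 := fun p => by
    rw [← two_smul ℝ, norm_smul, Real.norm_two]
    ring
  have hpairs : ∑ p ∈ s, ∑ q ∈ s, ‖d p + d q‖ ^ 2
      ≤ 4 * ∑ p ∈ s, ∑ q ∈ s, ‖m p - m q‖ ^ 2 + 4 * T := calc
    _ ≤ ∑ p ∈ s, ∑ q ∈ s, (4 * ‖m p - m q‖ ^ 2 + if p = q then 4 * ‖d q‖ ^ 2 else 0) := by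
      refine sum_le_sum fun p hp => sum_le_sum fun q hq => ?_
      split_ifs with hpq
      · subst hpq
        simp [hdiag]
      · linarith [hpair p hp q hq hpq]
    _ = _ := by
      rw [mul_sum, mul_sum, ← sum_add_distrib]
      refine sum_congr rfl fun p hp => ?_
      rw [sum_add_distrib, sum_ite_eq, if_pos hp, mul_sum]
  have hcentroid := sum_sum_norm_sub_sq_le s m x
  have hradii : ∑ p ∈ s, ‖m p - x‖ ^ 2 < c * T := by
    rw [mul_sum]
    exact sum_lt_sum_of_nonempty hs hball
  have hedges := two_mul_card_mul_sum_norm_sq_le s d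
  have hcard : (0 : ℝ) < #s := by exact_mod_cast hs.card_pos
  by_contra! hge
  nlinarith [sum_nonneg fun p (_ : p ∈ s) => sq_nonneg ‖d p‖]

end InnerProductSpace

section BlockReverse

def blockReverse (i j q : ℕ) : ℕ := if i < q ∧ q ≤ j then i + j + 1 - q else q

lemma blockReverse_involutive (i j : ℕ) : Function.Involutive (blockReverse i j) := by
  intro q
  unfold blockReverse
  split_ifs <;> omega

lemma blockReverse_lt {i j n q : ℕ} (hjn : j < n) (hq : q < n) : blockReverse i j q < n := by
  unfold blockReverse
  split_ifs <;> omega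

lemma add_one_mod_eq_or {q n : ℕ} (hq : q < n) : (q + 1) % n = q + 1 ∨ (q + 1) % n = 0 := by
  rcases (Nat.succ_le_of_lt hq).lt_or_eq with h | h
  · exact .inl (Nat.mod_eq_of_lt h)
  · exact .inr (h ▸ Nat.mod_self n)

/-- Reversing the block of positions `i + 1, …, j` of a closed tour of length `n` replaces
its edges `(i, i + 1)` and `(j, j + 1)` by `(i, j)` and `(i + 1, j + 1)`. -/
lemma sum_range_blockReverse (w : ℕ → ℕ → ℝ) (hw : ∀ a b, w a b = w b a) {i j n : ℕ}
    (hij : i < j) (hjn : j < n) :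
    ∑ q ∈ range n, w (blockReverse i j q) (blockReverse i j ((q + 1) % n))
        + w i (i + 1) + w j ((j + 1) % n)
      = ∑ q ∈ range n, w q ((q + 1) % n) + w i j + w (i + 1) ((j + 1) % n) := by
  set ρ := blockReverse i j
  set A := fun q => w (ρ q) (ρ ((q + 1) % n))
  set B := fun q => w q ((q + 1) % n)
  have hρ : ∀ q, ρ q = if i < q ∧ q ≤ j then i + j + 1 - q else q := fun _ => rfl
  have hi1 : (i + 1) % n = i + 1 := Nat.mod_eq_of_lt (by omega)
  have hj1 : ρ ((j + 1) % n) = (j + 1) % n := by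
    rcases add_one_mod_eq_or hjn with h | h <;> rw [h, hρ, if_neg (by omega)]
  have houtside : ∀ q ∈ range n, q ∉ Icc i j → A q - B q = 0 := by
    intro q hq hq'
    rw [mem_range] at hq
    rw [mem_Icc] at hq'
    have hq1 : ρ ((q + 1) % n) = (q + 1) % n := by
      rcases add_one_mod_eq_or hq with h | h <;> rw [h, hρ, if_neg (by omega)]
    simp only [A, B, hq1, hρ q, if_neg (show ¬(i < q ∧ q ≤ j) by omega), sub_self]
  have hinside : ∑ q ∈ Ioo i j, A q = ∑ q ∈ Ioo i j, B q := by
    refine sum_nbij' (fun q => i + j - q) (fun q => i + j - q) ?_ ?_ ?_ ?_ fun q hq => ?_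
    any_goals (intro q hq; simp only [mem_Ioo] at hq ⊢; omega)
    rw [mem_Ioo] at hq
    have h₁ : (q + 1) % n = q + 1 := Nat.mod_eq_of_lt (by omega)
    have h₂ : (i + j - q + 1) % n = i + j - q + 1 := Nat.mod_eq_of_lt (by omega)
    simp only [A, B, h₁, h₂, hρ, if_pos (show i < q ∧ q ≤ j by omega),
      if_pos (show i < q + 1 ∧ q + 1 ≤ j by omega)]
    rw [hw]
    congr 1 <;> omega
  have hAi : A i = w i j := by
    simp only [A, hi1, hρ, if_neg (show ¬(i < i ∧ i ≤ j) by omega),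
      if_pos (show i < i + 1 ∧ i + 1 ≤ j by omega)]
    congr 1
    omega
  have hAj : A j = w (i + 1) ((j + 1) % n) := by
    simp only [A, hj1]
    rw [hρ, if_pos ⟨hij, le_rfl⟩]
    congr 1
    omega
  have hsplit : ∑ q ∈ Icc i j, (A q - B q)
      = (A i - B i) + ((A j - B j) + ∑ q ∈ Ioo i j, (A q - B q)) := by
    rw [← Ioc_insert_left hij.le, sum_insert left_notMem_Ioc,
      ← Ioo_insert_right hij, sum_insert right_notMem_Ioo]
  have hIcc : Icc i j ⊆ range n := fun q hq => by
    rw [mem_Icc] at hq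
    exact mem_range.mpr (by omega)
  have key := sum_subset hIcc houtside
  rw [hsplit, sum_sub_distrib, hinside, sub_self, sum_sub_distrib] at key
  simp only [A, B, hi1] at key hAi hAj ⊢
  linarith

def blockReversePerm {n : ℕ} (i j : ℕ) (hjn : j < n) : Equiv.Perm (Fin n) :=
  Function.Involutive.toPerm (fun p => ⟨blockReverse i j p, blockReverse_lt hjn p.isLt⟩)
    fun p => Fin.ext (blockReverse_involutive i j p)

lemma sum_blockReversePerm {n : ℕ} (w : Fin n → Fin n → ℝ) (hw : ∀ a b, w a b = w b a)
    {i j : Fin n} (hij : i < j) :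
    ∑ p, w (blockReversePerm i j j.isLt p) (blockReversePerm i j j.isLt (nxt p))
        + w i (nxt i) + w j (nxt j)
      = ∑ p, w p (nxt p) + w i j + w (nxt i) (nxt j) := by
  let W : ℕ → ℕ → ℝ := fun a b => if h : a < n ∧ b < n then w ⟨a, h.1⟩ ⟨b, h.2⟩ else 0
  have hW : ∀ a b : Fin n, w a b = W a b := fun a b => by simp [W]
  have hWsymm : ∀ a b, W a b = W b a := fun a b => by
    by_cases h : a < n ∧ b < n
    · simp only [W, dif_pos h, dif_pos (And.symm h), hw]
    · simp only [W, dif_neg h, dif_neg (mt And.symm h)]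
  have hi1 : (i.val + 1) % n = i.val + 1 := Nat.mod_eq_of_lt (by omega)
  have key := sum_range_blockReverse W hWsymm hij j.isLt
  rw [← Fin.sum_univ_eq_sum_range, ← Fin.sum_univ_eq_sum_range, ← hi1] at key
  simp only [hW]
  exact key

end BlockReverse

section HamCycle

variable {k : ℕ} {X : Finset (EuclideanSpace ℝ (Fin k))}

noncomputable def cycleSqLength {n : ℕ} (f : Fin n → EuclideanSpace ℝ (Fin k)) : ℝ :=
  ∑ i, ‖f i - f (nxt i)‖ ^ 2

def IsSqMinimalHamCycle (X : Finset (EuclideanSpace ℝ (Fin k)))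
    (f : Fin X.card → EuclideanSpace ℝ (Fin k)) : Prop :=
  IsHamCycle X f ∧ ∀ g, IsHamCycle X g → cycleSqLength f ≤ cycleSqLength g

lemma IsHamCycle.comp_perm {f : Fin X.card → EuclideanSpace ℝ (Fin k)} (hf : IsHamCycle X f)
    (σ : Equiv.Perm (Fin X.card)) : IsHamCycle X (f ∘ σ) :=
  ⟨hf.1.comp σ.injective, fun y => (hf.2 y).trans
    ⟨fun ⟨i, hi⟩ => ⟨σ.symm i, by simp [hi]⟩, fun ⟨i, hi⟩ => ⟨σ i, hi⟩⟩⟩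

namespace IsSqMinimalHamCycle

variable {f : Fin X.card → EuclideanSpace ℝ (Fin k)}

lemma sq_edge_add_sq_edge_le (hf : IsSqMinimalHamCycle X f) {i j : Fin X.card} (hij : i < j) :
    ‖f i - f (nxt i)‖ ^ 2 + ‖f j - f (nxt j)‖ ^ 2
      ≤ ‖f i - f j‖ ^ 2 + ‖f (nxt i) - f (nxt j)‖ ^ 2 := by
  have hmin := hf.2 _ (hf.1.comp_perm (blockReversePerm i j j.isLt))
  have hsum := sum_blockReversePerm (fun a b => ‖f a - f b‖ ^ 2)
    (fun a b => by rw [norm_sub_rev]) hij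
  simp only [cycleSqLength, Function.comp_apply] at hmin hsum
  linarith

lemma norm_edge_add_edge_sq_le (hf : IsSqMinimalHamCycle X f) {i j : Fin X.card} (hij : i ≠ j) :
    ‖f i - f (nxt i) + (f j - f (nxt j))‖ ^ 2
      ≤ 4 * ‖midpoint ℝ (f i) (f (nxt i)) - midpoint ℝ (f j) (f (nxt j))‖ ^ 2 := by
  rcases hij.lt_or_gt with h | h
  · exact norm_sub_add_sub_sq_le_four_mul_norm_midpoint_sub_sq (hf.sq_edge_add_sq_edge_le h)
  · rw [add_comm, norm_sub_rev (midpoint ℝ _ _)]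
    exact norm_sub_add_sub_sq_le_four_mul_norm_midpoint_sub_sq (hf.sq_edge_add_sq_edge_le h)

end IsSqMinimalHamCycle

end HamCycle

theorem hamCycle_balls_fold_general (k t : ℕ)
    (X : Finset (EuclideanSpace ℝ (Fin k)))
    (f : Fin X.card → EuclideanSpace ℝ (Fin k)) (hf : IsHamCycle X f)
    (hmin : ∀ g : Fin X.card → EuclideanSpace ℝ (Fin k), IsHamCycle X g →
      ∑ i, ‖f i - f (nxt i)‖ ^ 2 ≤ ∑ i, ‖g i - g (nxt i)‖ ^ 2)
    (x : EuclideanSpace ℝ (Fin k)) :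
    (Finset.univ.filter fun i => ‖x - midpoint ℝ (f i) (f (nxt i))‖ <
        Real.sqrt (t / (4 * (t + 1))) * ‖f i - f (nxt i)‖).card ≤ 2 * t + 1 := by
  set c : ℝ := t / (4 * (t + 1)) with hc
  set S := Finset.univ.filter fun i => ‖x - midpoint ℝ (f i) (f (nxt i))‖ <
    Real.sqrt c * ‖f i - f (nxt i)‖
  have hball : ∀ i ∈ S, ‖midpoint ℝ (f i) (f (nxt i)) - x‖ ^ 2 < c * ‖f i - f (nxt i)‖ ^ 2 := by
    intro i hi
    rw [Finset.mem_filter] at hi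
    rw [norm_sub_rev, ← Real.sq_sqrt (by positivity : 0 ≤ c), ← mul_pow]
    exact pow_lt_pow_left₀ hi.2 (norm_nonneg _) two_ne_zero
  have hcount := card_mul_one_sub_four_mul_lt_two S _ _ x c
    (fun i _ j _ hij => IsSqMinimalHamCycle.norm_edge_add_edge_sq_le ⟨hf, hmin⟩ hij) hball
  have hc' : 1 - 4 * c = 1 / (t + 1) := by
    rw [hc]
    field_simp
    ring
  rw [hc', mul_one_div, div_lt_iff₀ (by positivity)] at hcount
  have : S.card < 2 * t + 2 := by exact_mod_cast (by linarith : (S.card : ℝ) < 2 * t + 2)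
  omega

theorem hamCycle_balls_fold (k t : ℕ) (ht : 1 ≤ t)
    (X : Finset (EuclideanSpace ℝ (Fin k)))
    (f : Fin X.card → EuclideanSpace ℝ (Fin k)) (hf : IsHamCycle X f)
    (hmin : ∀ g : Fin X.card → EuclideanSpace ℝ (Fin k), IsHamCycle X g →
      ∑ i, ‖f i - f (nxt i)‖ ^ 2 ≤ ∑ i, ‖g i - g (nxt i)‖ ^ 2)
    (x : EuclideanSpace ℝ (Fin k)) :
    (Finset.univ.filter fun i => ‖x - midpoint ℝ (f i) (f (nxt i))‖ <
        Real.sqrt (t / (4 * (t + 1))) * ‖f i - f (nxt i)‖).card ≤ 2 * t + 1 :=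
  hamCycle_balls_fold_general k t X f hf hmin x
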